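/- arXiv:1301.4435 — 2 statements merged into one kernel-verified Lean document; each statement's English description precedes it below -/
import Mathlib

section
/- Let Z' and Z'' be real symmetric n×n matrices with Z'' positive definite. Then the 2n×2n real matrix ℒ = [[Z'' + Z'(Z'')⁻¹Z', Z'(Z'')⁻¹], [(Z'')⁻¹Z', (Z'')⁻¹]] is symmetric and positive definite. -/
open Matrix

/-! `ℒ = Pᴴ · diag(Z'', Z''⁻¹) · P` for the unipotent block matrix `P = [[1, 0], [Z', 1]]`,
so `ℒ` is congruent to a block diagonal matrix with positive definite blocks. -/

namespace Matrix.PosDef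

variable {m n R : Type*} [Fintype m] [Fintype n] [CommRing R] [PartialOrder R] [StarRing R]
  [StarOrderedRing R]

theorem fromBlocks_zero_zero {A : Matrix m m R} {D : Matrix n n R} (hA : A.PosDef)
    (hD : D.PosDef) :
    (fromBlocks A 0 0 D).PosDef := by
  refine of_dotProduct_mulVec_pos (hA.isHermitian.fromBlocks (by simp) hD.isHermitian) ?_
  intro x hx
  obtain ⟨u, v, rfl⟩ : ∃ u v, x = Sum.elim u v := ⟨x ∘ Sum.inl, x ∘ Sum.inr, by simp⟩
  rw [fromBlocks_mulVec, Function.star_sumElim]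
  simp only [zero_mulVec, add_zero, zero_add, sumElim_dotProduct_sumElim]
  by_cases hu : u = 0
  · subst hu
    have hv : v ≠ 0 := by rintro rfl; simp at hx
    simpa using hD.dotProduct_mulVec_pos hv
  · exact add_pos_of_pos_of_nonneg (hA.dotProduct_mulVec_pos hu)
      (hD.posSemidef.dotProduct_mulVec_nonneg v)

theorem fromBlocks_add_conjTranspose_mul_mul [DecidableEq m] [DecidableEq n]
    {A : Matrix m m R} {D : Matrix n n R} (hA : A.PosDef) (hD : D.PosDef) (C : Matrix n m R) :
    (fromBlocks (A + Cᴴ * D * C) (Cᴴ * D) (D * C) D).PosDef := by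
  have hfac : fromBlocks (A + Cᴴ * D * C) (Cᴴ * D) (D * C) D =
      (fromBlocks 1 0 C 1)ᴴ * fromBlocks A 0 0 D * fromBlocks 1 0 C 1 := by
    simp [fromBlocks_conjTranspose, fromBlocks_multiply, Matrix.mul_assoc]
  rw [hfac]
  refine (fromBlocks_zero_zero hA hD).conjTranspose_mul_mul_same (mulVec_injective_of_isUnit ?_)
  exact isUnit_fromBlocks_zero₁₂.mpr ⟨isUnit_one, isUnit_one⟩

end Matrix.PosDef

theorem L_matrix_posDef_general {n : ℕ}
    (Z' Z'' : Matrix (Fin n) (Fin n) ℝ)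
    (hZ' : Z'.IsSymm) (hZ'' : Z''.PosDef) :
    (fromBlocks (Z'' + Z' * Z''⁻¹ * Z') (Z' * Z''⁻¹) (Z''⁻¹ * Z') Z''⁻¹).IsSymm ∧
    (fromBlocks (Z'' + Z' * Z''⁻¹ * Z') (Z' * Z''⁻¹) (Z''⁻¹ * Z') Z''⁻¹).PosDef := by
  have hL := hZ''.fromBlocks_add_conjTranspose_mul_mul hZ''.inv Z'
  rw [conjTranspose_eq_transpose_of_trivial, hZ'.eq] at hL
  exact ⟨isHermitian_iff_isSymm.mp hL.isHermitian, hL⟩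

/-- If `Z'` and `Z''` are real symmetric matrices with `Z''` positive definite, then
the block matrix `ℒ = [[Z'' + Z' (Z'')⁻¹ Z', Z' (Z'')⁻¹], [(Z'')⁻¹ Z', (Z'')⁻¹]]`
is symmetric and positive definite. -/
theorem L_matrix_posDef {n : ℕ}
    (Z' Z'' : Matrix (Fin n) (Fin n) ℝ)
    (hZ' : Z'.IsSymm) (hZ''s : Z''.IsSymm) (hZ'' : Z''.PosDef) :
    (fromBlocks (Z'' + Z' * Z''⁻¹ * Z') (Z' * Z''⁻¹) (Z''⁻¹ * Z') Z''⁻¹).IsSymm ∧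
    (fromBlocks (Z'' + Z' * Z''⁻¹ * Z') (Z' * Z''⁻¹) (Z''⁻¹ * Z') Z''⁻¹).PosDef :=
  L_matrix_posDef_general Z' Z'' hZ' hZ''
end

section
/- Let V be a real normed vector space, B : V × V → ℝ a symmetric bilinear form, and suppose there are constants γ₂ > 0 and Γ > 0 such that γ₂‖s‖² ≤ B(s, s) ≤ Γ‖s‖² for all s ∈ V. Let F : V → ℝ be linear, let u ∈ V satisfy B(u, s) = F(s) for all s ∈ V, let W ⊆ V be a linear subspace, define f(s) = (1/2)B(s, s) − F(s), and suppose u_N ∈ W satisfies f(u_N) ≤ f(s) for all s ∈ W. Then for every s ∈ W, ‖u − u_N‖ ≤ √(Γ/γ₂) · ‖u − s‖. -/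
/-- Céa-type lemma: if the symmetric bilinear form `B` satisfies the two-sided bound
`γ₂ ‖s‖² ≤ B(s,s) ≤ Γ ‖s‖²`, `u` satisfies `B(u, s) = F(s)` for all `s`, and `u_N`
minimizes the energy `f(s) = (1/2) B(s,s) - F(s)` over a subspace `W`, then
`‖u - u_N‖ ≤ √(Γ/γ₂) ‖u - s‖` for every `s ∈ W`. -/
theorem cea_lemma_energy_minimization {V : Type*}
    [NormedAddCommGroup V] [NormedSpace ℝ V]
    (B : V →ₗ[ℝ] V →ₗ[ℝ] ℝ) (hB : ∀ x y : V, B x y = B y x)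
    (γ₂ Γ : ℝ) (hγ₂ : 0 < γ₂) (hΓ : 0 < Γ)
    (hlow : ∀ s : V, γ₂ * ‖s‖ ^ 2 ≤ B s s)
    (hhigh : ∀ s : V, B s s ≤ Γ * ‖s‖ ^ 2)
    (F : V →ₗ[ℝ] ℝ) (u : V) (hu : ∀ s : V, B u s = F s)
    (W : Submodule ℝ V) (uN : V) (huN : uN ∈ W)
    (hmin : ∀ s ∈ W, (1 / 2) * B uN uN - F uN ≤ (1 / 2) * B s s - F s) :
    ∀ s ∈ W, ‖u - uN‖ ≤ Real.sqrt (Γ / γ₂) * ‖u - s‖ := by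
  intro s hs
  have hexp : ∀ a : V, B (u - a) (u - a) = B u u - 2 * B u a + B a a := by
    intro a
    have h := hB a u
    simp only [map_sub, LinearMap.sub_apply]
    linarith
  have key : B (u - uN) (u - uN) ≤ B (u - s) (u - s) := by
    have h1 := hmin s hs
    have e1 := hexp uN
    have e2 := hexp s
    rw [← hu uN, ← hu s] at h1
    linarith
  have h2 : γ₂ * ‖u - uN‖ ^ 2 ≤ Γ * ‖u - s‖ ^ 2 :=
    le_trans (hlow _) (le_trans key (hhigh _))
  have h3 : ‖u - uN‖ ^ 2 ≤ (Γ / γ₂) * ‖u - s‖ ^ 2 := by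
    rw [div_mul_eq_mul_div, le_div_iff₀ hγ₂]
    nlinarith
  calc ‖u - uN‖ = Real.sqrt (‖u - uN‖ ^ 2) := (Real.sqrt_sq (norm_nonneg _)).symm
    _ ≤ Real.sqrt ((Γ / γ₂) * ‖u - s‖ ^ 2) := Real.sqrt_le_sqrt h3
    _ = Real.sqrt (Γ / γ₂) * ‖u - s‖ := by
        rw [Real.sqrt_mul (by positivity), Real.sqrt_sq (norm_nonneg _)]
end
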